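/- Let V be a 2n×2n integer matrix that is Alexander trivial, i.e. det(t·V − Vᵀ) = tⁿ in ℤ[t]. Then for every integer w ≥ 1, the 2nw×2nw matrix S_w(V) is Alexander trivial: det(t·S_w(V) − S_w(V)ᵀ) = t^{nw} in ℤ[t]. -/

import Mathlib

/-!
Write `t • S_w(V) - S_w(V)ᵀ = A ⊗ V - B ⊗ Vᵀ` with `w × w` matrices `A`, `B` over the ring of
`t`. Subtracting from each block row the previous one (`1 - N`, `N` the lower shift) and applying
the unimodular column operation `(1 - t N)⁻¹` turns this pencil into `G ⊗ V - 1 ⊗ Vᵀ`, where `G`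
is upper triangular with diagonal `(t^w, 1, …, 1)`. Hence
`det (t • S_w(V) - S_w(V)ᵀ) = det (t^w • V - Vᵀ) * det (V - Vᵀ)^(w-1)`.
For an Alexander trivial `V`, evaluating `det (t • V - Vᵀ) = tⁿ` at `t = 1` gives
`det (V - Vᵀ) = 1`, and substituting `t ↦ t^w` gives `det (t^w • V - Vᵀ) = t^(n w)`.
-/

open Matrix Polynomial

/-- `S_w(V)`: the `wN×wN` block matrix with `(i,j)`-block `V` for `i ≤ j` and `Vᵀ` for `i > j`. -/
def cableS {R : Type*} [CommRing R] {ι : Type*} (w : ℕ) (V : Matrix ι ι R) :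
    Matrix (Fin w × ι) (Fin w × ι) R :=
  Matrix.of fun i j => if i.1 ≤ j.1 then V i.2 j.2 else V j.2 i.2

/-- The Alexander determinant polynomial `det(t·B − Bᵀ)` of an integer square matrix `B`. -/
noncomputable def alexPoly {ι : Type*} [Fintype ι] [DecidableEq ι] (B : Matrix ι ι ℤ) : ℤ[X] :=
  ((X : ℤ[X]) • B.map (fun a : ℤ => (a : ℤ[X]))
    - Bᵀ.map (fun a : ℤ => (a : ℤ[X]))).det

open Finset Kronecker

namespace Matrix

variable {R : Type*} [CommRing R]

variable (R) in
def lowerShift (w : ℕ) : Matrix (Fin w) (Fin w) R :=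
  of fun i j => if (j : ℕ) + 1 = i then 1 else 0

lemma lowerShift_mul_apply {w : ℕ} (M : Matrix (Fin w) (Fin w) R) (i j : Fin w) :
    (lowerShift R w * M) i j = if h : (i : ℕ) = 0 then 0 else M ⟨i - 1, by omega⟩ j := by
  rw [mul_apply]
  split_ifs with h
  · exact sum_eq_zero fun x _ => by simp [lowerShift]; omega
  · rw [Fintype.sum_eq_single ⟨i - 1, by omega⟩ fun x hx => ?_]
    · simp [lowerShift]; omega
    · simp [lowerShift, Fin.ext_iff] at hx ⊢; omega

lemma mul_lowerShift_apply {w : ℕ} (M : Matrix (Fin w) (Fin w) R) (i j : Fin w) :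
    (M * lowerShift R w) i j = if h : (j : ℕ) + 1 < w then M i ⟨j + 1, h⟩ else 0 := by
  rw [mul_apply]
  split_ifs with h
  · rw [Fintype.sum_eq_single ⟨j + 1, h⟩ fun x hx => ?_]
    · simp [lowerShift]
    · simp [lowerShift, Fin.ext_iff] at hx ⊢; omega
  · exact sum_eq_zero fun x _ => by simp [lowerShift]; omega

lemma det_one_sub_smul_lowerShift (c : R) (w : ℕ) : (1 - c • lowerShift R w).det = 1 := by
  rw [det_of_isLowerTriangular]
  · simp [lowerShift]
  · intro i j (h : i < j)
    simp [lowerShift, Fin.ne_of_lt h]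
    omega

theorem det_kronecker_sub_kronecker_of_isUpperTriangular {m ι : Type*} [Fintype m]
    [LinearOrder m] [Fintype ι] [DecidableEq ι] {G H : Matrix m m R} (hG : G.IsUpperTriangular)
    (hH : H.IsUpperTriangular) (V W : Matrix ι ι R) :
    (G ⊗ₖ V - H ⊗ₖ W).det = ∏ i, (G i i • V - H i i • W).det := by
  have hT : (G ⊗ₖ V - H ⊗ₖ W).BlockTriangular Prod.fst := fun x y (h : y.1 < x.1) => by
    simp [hG h, hH h]
  rw [hT.det_fintype]
  refine prod_congr rfl fun i _ => ?_
  let e : ι ≃ {x : m × ι // x.1 = i} :=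
    ⟨fun a => ⟨(i, a), rfl⟩, fun x => x.1.2, fun _ => rfl,
      fun x => Subtype.ext (Prod.ext x.2.symm rfl)⟩
  rw [← det_submatrix_equiv_self e]
  congr 1

end Matrix

section Cable

variable {R : Type*} [CommRing R]

def cableCoeff (t : R) (w : ℕ) : Matrix (Fin w) (Fin w) R :=
  of fun i j => (if i ≤ j then t else 0) - if i < j then 1 else 0

def cableCoeffTranspose (t : R) (w : ℕ) : Matrix (Fin w) (Fin w) R :=
  of fun i j => (if j ≤ i then 1 else 0) - if j < i then t else 0

def cableReduced (t : R) (w : ℕ) : Matrix (Fin w) (Fin w) R :=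
  (1 : Matrix (Fin w) (Fin w) R) +
    of fun (i j : Fin w) => if (i : ℕ) = 0 then t ^ (w - j) - 1 else 0

lemma one_sub_lowerShift_mul_cableCoeffTranspose (t : R) (w : ℕ) :
    (1 - lowerShift R w) * cableCoeffTranspose t w = 1 - t • lowerShift R w := by
  ext i j
  simp only [sub_mul, one_mul, Matrix.sub_apply, Matrix.smul_apply, lowerShift_mul_apply]
  simp only [cableCoeffTranspose, lowerShift, Matrix.one_apply, of_apply, smul_eq_mul, Fin.ext_iff,
    Fin.le_def, Fin.lt_def]
  split_ifs <;> first | ring1 | (exfalso; omega)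

lemma one_sub_lowerShift_mul_cableCoeff (t : R) (w : ℕ) :
    (1 - lowerShift R w) * cableCoeff t w = cableReduced t w * (1 - t • lowerShift R w) := by
  ext i j
  simp only [sub_mul, mul_sub, one_mul, mul_one, Matrix.mul_smul, Matrix.sub_apply,
    Matrix.smul_apply, lowerShift_mul_apply, mul_lowerShift_apply]
  simp only [cableCoeff, cableReduced, Matrix.add_apply, Matrix.one_apply, of_apply, Fin.ext_iff,
    Fin.le_def, Fin.lt_def]
  split_ifs <;> first
    | ring1
    | (exfalso; omega)
    | (rw [show w - (j : ℕ) = w - (j + 1) + 1 by omega]; ring1)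
    | (rw [show w - (j : ℕ) = 1 by omega]; ring1)

lemma cableReduced_isUpperTriangular (t : R) (w : ℕ) : (cableReduced t w).IsUpperTriangular :=
  fun i j (h : j < i) => by
    simp [cableReduced, Fin.ne_of_gt h]
    omega

lemma cableReduced_zero_zero (t : R) (w : ℕ) : cableReduced t (w + 1) 0 0 = t ^ (w + 1) := by
  simp [cableReduced]

lemma cableReduced_succ_succ (t : R) {w : ℕ} (i : Fin w) :
    cableReduced t (w + 1) i.succ i.succ = 1 := by
  simp [cableReduced]

variable {ι : Type*}

lemma cableS_map {S : Type*} [CommRing S] (w : ℕ) (V : Matrix ι ι R) (f : R → S) :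
    (cableS w V).map f = cableS w (V.map f) := by
  ext i j
  simp [cableS, apply_ite f]

lemma smul_cableS_sub_transpose (t : R) (w : ℕ) (V : Matrix ι ι R) :
    t • cableS w V - (cableS w V)ᵀ = cableCoeff t w ⊗ₖ V - cableCoeffTranspose t w ⊗ₖ Vᵀ := by
  ext ⟨i, a⟩ ⟨j, b⟩
  simp only [cableS, cableCoeff, cableCoeffTranspose, Matrix.sub_apply, Matrix.smul_apply,
    transpose_apply, kroneckerMap_apply, of_apply, smul_eq_mul]
  split_ifs <;> first | ring1 | (exfalso; order)

variable [Fintype ι] [DecidableEq ι]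

theorem det_smul_cableS_sub_transpose (t : R) (w : ℕ) (V : Matrix ι ι R) :
    (t • cableS (w + 1) V - (cableS (w + 1) V)ᵀ).det =
      (t ^ (w + 1) • V - Vᵀ).det * (V - Vᵀ).det ^ w := by
  have hrow : ((1 - lowerShift R (w + 1)) ⊗ₖ (1 : Matrix ι ι R)).det = 1 := by
    rw [det_kronecker, ← one_smul R (lowerShift R (w + 1)), det_one_sub_smul_lowerShift]
    simp
  have hcol : ((1 - t • lowerShift R (w + 1)) ⊗ₖ (1 : Matrix ι ι R)).det = 1 := by
    simp [det_kronecker, det_one_sub_smul_lowerShift]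
  have hreduce : ((1 - lowerShift R (w + 1)) ⊗ₖ (1 : Matrix ι ι R)) *
        (t • cableS (w + 1) V - (cableS (w + 1) V)ᵀ) =
      (cableReduced t (w + 1) ⊗ₖ V - 1 ⊗ₖ Vᵀ) * ((1 - t • lowerShift R (w + 1)) ⊗ₖ 1) := by
    rw [smul_cableS_sub_transpose, Matrix.mul_sub, Matrix.sub_mul, ← mul_kronecker_mul,
      ← mul_kronecker_mul, ← mul_kronecker_mul, ← mul_kronecker_mul,
      one_sub_lowerShift_mul_cableCoeff, one_sub_lowerShift_mul_cableCoeffTranspose]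
    simp
  have hdet := congrArg det hreduce
  rw [det_mul, det_mul, hrow, hcol, one_mul, mul_one,
    det_kronecker_sub_kronecker_of_isUpperTriangular (cableReduced_isUpperTriangular t _)
      blockTriangular_one, Fin.prod_univ_succ] at hdet
  simpa [cableReduced_zero_zero, cableReduced_succ_succ] using hdet

end Cable

lemma alexPoly_eval₂ {R : Type*} [CommRing R] {ι : Type*} [Fintype ι] [DecidableEq ι]
    (B : Matrix ι ι ℤ) (x : R) :
    (alexPoly B).eval₂ (Int.castRingHom R) x =
      (x • B.map (fun a : ℤ => (a : R)) - (B.map (fun a : ℤ => (a : R)))ᵀ).det := by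
  rw [alexPoly, ← coe_eval₂RingHom, RingHom.map_det]
  congr 1
  ext i j
  simp only [RingHom.mapMatrix_apply, map_apply, Matrix.sub_apply, Matrix.smul_apply,
    transpose_apply, smul_eq_mul, map_sub, map_mul, map_intCast]
  rw [coe_eval₂RingHom, eval₂_X]

/-- if a `2n×2n` integer matrix `V` is Alexander trivial,
i.e. `det(t·V − Vᵀ) = tⁿ`, then for every `w ≥ 1` the matrix `S_w(V)` is
Alexander trivial: `det(t·S_w(V) − S_w(V)ᵀ) = t^{nw}`. -/
theorem cableS_alexander_trivial (n w : ℕ) (hw : 1 ≤ w)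
    (V : Matrix (Fin (2 * n)) (Fin (2 * n)) ℤ)
    (hV : alexPoly V = (X : ℤ[X]) ^ n) :
    alexPoly (cableS w V) = (X : ℤ[X]) ^ (n * w) := by
  obtain ⟨k, rfl⟩ : ∃ k, w = k + 1 := ⟨w - 1, by omega⟩
  have hJ := alexPoly_eval₂ V (1 : ℤ[X])
  have hXw := alexPoly_eval₂ V ((X : ℤ[X]) ^ (k + 1))
  rw [hV, eval₂_X_pow, one_pow, one_smul] at hJ
  rw [hV, eval₂_X_pow, ← pow_mul, mul_comm] at hXw
  rw [alexPoly, transpose_map, cableS_map, det_smul_cableS_sub_transpose, ← hJ, ← hXw, one_pow,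
    mul_one]
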